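/- (Mrs. Gerber's Lemma, scalar version) For any fixed p ∈ [0, 1/2], the function ν ↦ H_b(H_b⁻¹(ν) ∗ p) is convex on [0, 1]. -/

import Mathlib

open scoped BigOperators

noncomputable def Hb (x : ℝ) : ℝ := -(x * Real.logb 2 x) - (1 - x) * Real.logb 2 (1 - x)

noncomputable def star (p q : ℝ) : ℝ := p * (1 - q) + (1 - p) * q

/-!
Write `a = g ν` and `L x = log (1 - x) - log x`, so that `Hb' = L / log 2`. By the inverse
function theorem the derivative of `ν ↦ Hb (a ∗ p)` is `(1 - 2p) L (a ∗ p) / L a`, so convexity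
amounts to this ratio increasing in `a` on `(0, 1/2)`. Differentiating, that is
`(1 - 2p) K a ≤ K (a ∗ p)` for `K x = x (1 - x) L x`. Since `a ∗ p = (1 - 2p) a + 2p · 1/2` and
`K (1/2) = 0`, this is concavity of `K` on `(0, 1/2]`, whose derivative `(1 - 2x) L x - 1` is a
product of nonnegative decreasing factors minus one.
-/

open Real Set

theorem MonotoneOn.continuousOn_of_surjOn {s t : Set ℝ} [s.OrdConnected] [t.OrdConnected]
    {f : ℝ → ℝ} (hf : MonotoneOn f s) (hmaps : MapsTo f s t) (hsurj : SurjOn f s t) :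
    ContinuousOn f s := by
  rw [continuousOn_iff_continuous_domRestrict]
  refine continuous_subtype_val.comp (f := hmaps.restrict) <|
    Monotone.continuous_of_surjective (fun x y hxy => hf x.2 y.2 hxy) fun y => ?_
  obtain ⟨x, hx, hxy⟩ := hsurj y.2
  exact ⟨⟨x, hx⟩, Subtype.ext hxy⟩

theorem convexOn_of_hasDerivAt_of_monotoneOn {D : Set ℝ} (hD : Convex ℝ D) {f f' : ℝ → ℝ}
    (hf : ContinuousOn f D) (hf' : ∀ x ∈ interior D, HasDerivAt f (f' x) x)
    (hmono : MonotoneOn f' (interior D)) : ConvexOn ℝ D f :=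
  (hmono.congr (deriv_eqOn isOpen_interior fun x hx => (hf' x hx).hasDerivWithinAt).symm
    ).convexOn_of_deriv hD hf fun x hx => (hf' x hx).differentiableAt.differentiableWithinAt

theorem concaveOn_of_hasDerivAt_of_antitoneOn {D : Set ℝ} (hD : Convex ℝ D) {f f' : ℝ → ℝ}
    (hf : ContinuousOn f D) (hf' : ∀ x ∈ interior D, HasDerivAt f (f' x) x)
    (hanti : AntitoneOn f' (interior D)) : ConcaveOn ℝ D f :=
  (hanti.congr (deriv_eqOn isOpen_interior fun x hx => (hf' x hx).hasDerivWithinAt).symm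
    ).concaveOn_of_deriv hD hf fun x hx => (hf' x hx).differentiableAt.differentiableWithinAt

theorem Hb_eq_binEntropy_div : Hb = fun x => binEntropy x / log 2 := by
  ext x
  simp only [Hb, binEntropy, logb, log_inv]
  ring

theorem continuous_Hb : Continuous Hb := by
  simpa only [Hb_eq_binEntropy_div] using binEntropy_continuous.div_const (log 2)

theorem hasDerivAt_Hb {x : ℝ} (h0 : x ≠ 0) (h1 : x ≠ 1) :
    HasDerivAt Hb ((log (1 - x) - log x) / log 2) x := by
  simpa only [Hb_eq_binEntropy_div] using (hasDerivAt_binEntropy h0 h1).div_const (log 2)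

theorem strictMonoOn_Hb : StrictMonoOn Hb (Icc 0 (1 / 2)) := fun x hx y hy hxy => by
  rw [one_div] at hx hy
  simpa only [Hb_eq_binEntropy_div] using
    div_lt_div_of_pos_right (binEntropy_strictMonoOn hx hy hxy) (log_pos one_lt_two)

theorem Hb_zero : Hb 0 = 0 := by simp [Hb_eq_binEntropy_div]

theorem Hb_one_half : Hb (1 / 2) = 1 := by
  simp [Hb_eq_binEntropy_div, (log_pos one_lt_two).ne']

theorem star_eq_mul_add (a p : ℝ) : star a p = (1 - 2 * p) * a + p := by
  simp only [_root_.star]; ring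

theorem star_mem_Ioc {a p : ℝ} (ha : a ∈ Ioo 0 (1 / 2)) (hp : p ∈ Icc 0 (1 / 2)) :
    star a p ∈ Ioc 0 (1 / 2) := by
  obtain ⟨ha0, ha1⟩ := ha
  obtain ⟨hp0, hp1⟩ := hp
  rw [star_eq_mul_add]
  constructor <;> nlinarith

theorem hasDerivAt_log_one_sub_sub_log {x : ℝ} (h0 : x ≠ 0) (h1 : x ≠ 1) :
    HasDerivAt (fun y => log (1 - y) - log y) (-(x * (1 - x))⁻¹) x := by
  have h1' : 1 - x ≠ 0 := sub_ne_zero.2 h1.symm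
  refine ((((hasDerivAt_id' x).const_sub 1).log h1').sub ((hasDerivAt_id' x).log h0)).congr_deriv ?_
  field_simp
  ring

theorem log_one_sub_sub_log_nonneg {x : ℝ} (h0 : 0 < x) (h1 : x ≤ 1 / 2) :
    0 ≤ log (1 - x) - log x :=
  sub_nonneg.2 (log_le_log h0 (by linarith))

theorem antitoneOn_log_one_sub_sub_log : AntitoneOn (fun x => log (1 - x) - log x) (Ioo 0 1) :=
  fun x hx y hy hxy =>
    sub_le_sub (log_le_log (by linarith [hy.2]) (by linarith)) (log_le_log hx.1 hxy)

noncomputable def bernVarLogOdds (x : ℝ) : ℝ := x * (1 - x) * (log (1 - x) - log x)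

theorem hasDerivAt_bernVarLogOdds {x : ℝ} (h0 : x ≠ 0) (h1 : x ≠ 1) :
    HasDerivAt bernVarLogOdds ((1 - 2 * x) * (log (1 - x) - log x) - 1) x := by
  have hvar : HasDerivAt (fun x : ℝ => x * (1 - x)) (1 - 2 * x) x :=
    ((hasDerivAt_id' x).mul ((hasDerivAt_id' x).const_sub 1)).congr_deriv (by ring)
  refine (hvar.mul (hasDerivAt_log_one_sub_sub_log h0 h1)).congr_deriv ?_
  have : 1 - x ≠ 0 := sub_ne_zero.2 h1.symm
  field_simp
  ring

theorem concaveOn_bernVarLogOdds : ConcaveOn ℝ (Ioc 0 (1 / 2)) bernVarLogOdds := by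
  have hderiv : ∀ x ∈ Ioc (0:ℝ) (1 / 2), HasDerivAt bernVarLogOdds
      ((1 - 2 * x) * (log (1 - x) - log x) - 1) x := fun x hx =>
    hasDerivAt_bernVarLogOdds hx.1.ne' (by linarith [hx.2])
  have hanti : AntitoneOn (fun x => (1 - 2 * x) * (log (1 - x) - log x) - 1) (Ioo 0 (1 / 2)) := by
    intro x hx y hy hxy
    have hLy := log_one_sub_sub_log_nonneg hy.1 hy.2.le
    have hL := antitoneOn_log_one_sub_sub_log ⟨hx.1, by linarith [hx.2]⟩
      ⟨hy.1, by linarith [hy.2]⟩ hxy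
    exact sub_le_sub_right (mul_le_mul (by linarith) hL hLy (by linarith [hx.2])) 1
  refine concaveOn_of_hasDerivAt_of_antitoneOn (convex_Ioc 0 _)
    (fun x hx => (hderiv x hx).continuousAt.continuousWithinAt) ?_ (by rwa [interior_Ioc])
  rw [interior_Ioc]
  exact fun x hx => hderiv x (Ioo_subset_Ioc_self hx)

theorem mul_bernVarLogOdds_le_star {a p : ℝ} (ha : a ∈ Ioc 0 (1 / 2)) (hp : p ∈ Icc 0 (1 / 2)) :
    (1 - 2 * p) * bernVarLogOdds a ≤ bernVarLogOdds (star a p) := by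
  have h := concaveOn_bernVarLogOdds.2 ha (right_mem_Ioc.2 one_half_pos)
    (by linarith [hp.2]) (by linarith [hp.1]) (by ring : (1 - 2 * p) + 2 * p = 1)
  have hstar : (1 - 2 * p) • a + (2 * p) • (1 / 2 : ℝ) = star a p := by
    rw [star_eq_mul_add, smul_eq_mul, smul_eq_mul]; ring
  have hhalf : bernVarLogOdds (1 / 2) = 0 := by norm_num [bernVarLogOdds]
  rwa [hhalf, smul_zero, add_zero, hstar, smul_eq_mul] at h

-- the slope of `ν ↦ Hb (star (g ν) p)` at `ν = Hb a`, `g` being the inverse of `Hb`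
noncomputable def gerberSlope (p a : ℝ) : ℝ :=
  (1 - 2 * p) * (log (1 - star a p) - log (star a p)) / (log (1 - a) - log a)

theorem monotoneOn_gerberSlope {p : ℝ} (hp : p ∈ Icc 0 (1 / 2)) :
    MonotoneOn (gerberSlope p) (Ioo 0 (1 / 2)) := by
  set s := 1 - 2 * p
  have hderiv : ∀ a ∈ Ioo (0:ℝ) (1 / 2), HasDerivAt (gerberSlope p)
      (s * (bernVarLogOdds (star a p) - s * bernVarLogOdds a)
        / (a * (1 - a) * (star a p * (1 - star a p)) * (log (1 - a) - log a) ^ 2)) a := by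
    intro a ha
    obtain ⟨hb0, hb1⟩ := star_mem_Ioc ha hp
    have ha1 : 1 - a ≠ 0 := by linarith [ha.2]
    have hb1' : 1 - star a p ≠ 0 := by linarith
    have hL : log (1 - a) - log a ≠ 0 := (sub_pos.2 (log_lt_log ha.1 (by linarith [ha.2]))).ne'
    have hstar : HasDerivAt (fun x => star x p) s a := by
      simp only [star_eq_mul_add]
      exact ((hasDerivAt_id' a).const_mul s).add_const p |>.congr_deriv (mul_one s)
    have hnum := ((hasDerivAt_log_one_sub_sub_log hb0.ne' (by linarith)).comp a hstar).const_mul s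
    have hden := hasDerivAt_log_one_sub_sub_log ha.1.ne' (by linarith [ha.2])
    refine (hnum.div hden hL).congr_deriv ?_
    have := ha.1.ne'
    have := hb0.ne'
    simp only [bernVarLogOdds, Function.comp_apply]
    field_simp
    ring
  refine monotoneOn_of_deriv_nonneg (convex_Ioo 0 _)
    (fun a ha => (hderiv a ha).continuousAt.continuousWithinAt) ?_ ?_ <;> rw [interior_Ioo]
  · exact fun a ha => (hderiv a ha).differentiableAt.differentiableWithinAt
  intro a ha
  obtain ⟨hb0, hb1⟩ := star_mem_Ioc ha hp
  have hK := sub_nonneg.2 (mul_bernVarLogOdds_le_star (Ioo_subset_Ioc_self ha) hp)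
  have hvar : 0 < a * (1 - a) * (star a p * (1 - star a p)) :=
    mul_pos (mul_pos ha.1 (by linarith [ha.2])) (mul_pos hb0 (by linarith))
  rw [(hderiv a ha).deriv]
  exact div_nonneg (mul_nonneg (by linarith [hp.2]) hK) (by positivity)

def IsHbInvOn (g : ℝ → ℝ) : Prop := ∀ y ∈ Icc (0:ℝ) 1, g y ∈ Icc (0:ℝ) (1 / 2) ∧ Hb (g y) = y

namespace IsHbInvOn

variable {g : ℝ → ℝ} {p : ℝ}

theorem mapsTo (hg : IsHbInvOn g) : MapsTo g (Icc 0 1) (Icc 0 (1 / 2)) := fun y hy => (hg y hy).1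

theorem strictMonoOn (hg : IsHbInvOn g) : StrictMonoOn g (Icc 0 1) := fun x hx y hy hxy => by
  rwa [← strictMonoOn_Hb.lt_iff_lt (hg.mapsTo hx) (hg.mapsTo hy), (hg x hx).2, (hg y hy).2]

theorem surjOn (hg : IsHbInvOn g) : SurjOn g (Icc 0 1) (Icc 0 (1 / 2)) := fun x hx => by
  have hHbx : Hb x ∈ Icc (0:ℝ) 1 := by
    rw [← Hb_zero, ← Hb_one_half]
    exact ⟨strictMonoOn_Hb.monotoneOn (left_mem_Icc.2 (by norm_num)) hx hx.1,
      strictMonoOn_Hb.monotoneOn hx (right_mem_Icc.2 (by norm_num)) hx.2⟩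
  exact ⟨Hb x, hHbx, strictMonoOn_Hb.injOn (hg.mapsTo hHbx) hx (hg _ hHbx).2⟩

theorem continuousOn (hg : IsHbInvOn g) : ContinuousOn g (Icc 0 1) :=
  hg.strictMonoOn.monotoneOn.continuousOn_of_surjOn hg.mapsTo hg.surjOn

theorem mapsTo_Ioo (hg : IsHbInvOn g) : MapsTo g (Ioo 0 1) (Ioo 0 (1 / 2)) := fun y hy => by
  obtain ⟨⟨h0, h1⟩, hHb⟩ := hg y (Ioo_subset_Icc_self hy)
  refine ⟨h0.lt_of_ne ?_, h1.lt_of_ne ?_⟩ <;> rintro hgy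
  · rw [← hgy, Hb_zero] at hHb; exact hy.1.ne hHb
  · rw [hgy, Hb_one_half] at hHb; exact hy.2.ne' hHb

theorem hasDerivAt (hg : IsHbInvOn g) {y : ℝ} (hy : y ∈ Ioo 0 1) :
    HasDerivAt g ((log (1 - g y) - log (g y)) / log 2)⁻¹ y := by
  obtain ⟨h0, h1⟩ := hg.mapsTo_Ioo hy
  have hlog : 0 < log (1 - g y) - log (g y) := sub_pos.2 (log_lt_log h0 (by linarith))
  refine HasDerivAt.of_local_left_inverse
    ((hg.continuousOn y (Ioo_subset_Icc_self hy)).continuousAt (Icc_mem_nhds hy.1 hy.2))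
    (hasDerivAt_Hb h0.ne' (by linarith)) (div_pos hlog (log_pos one_lt_two)).ne' ?_
  filter_upwards [Icc_mem_nhds hy.1 hy.2] with z hz using (hg z hz).2

theorem continuousOn_Hb_star (hg : IsHbInvOn g) :
    ContinuousOn (fun y => Hb (star (g y) p)) (Icc 0 1) := by
  simp only [star_eq_mul_add]
  exact continuous_Hb.comp_continuousOn
    ((continuousOn_const.mul hg.continuousOn).add continuousOn_const)

theorem hasDerivAt_Hb_star (hg : IsHbInvOn g) (hp : p ∈ Icc 0 (1 / 2)) {y : ℝ}
    (hy : y ∈ Ioo 0 1) :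
    HasDerivAt (fun y => Hb (star (g y) p)) (gerberSlope p (g y)) y := by
  have ha := hg.mapsTo_Ioo hy
  obtain ⟨hb0, hb1⟩ := star_mem_Ioc ha hp
  have hL : log (1 - g y) - log (g y) ≠ 0 := (sub_pos.2 (log_lt_log ha.1 (by linarith [ha.2]))).ne'
  have hstar : HasDerivAt (fun y => star (g y) p)
      ((1 - 2 * p) * ((log (1 - g y) - log (g y)) / log 2)⁻¹) y := by
    simp only [star_eq_mul_add]
    exact ((hg.hasDerivAt hy).const_mul _).add_const p
  refine ((hasDerivAt_Hb hb0.ne' (by linarith)).comp y hstar).congr_deriv ?_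
  have := (log_pos one_lt_two).ne'
  simp only [gerberSlope]
  field_simp

end IsHbInvOn

theorem mrs_gerber_scalar (p : ℝ) (hp : p ∈ Set.Icc (0:ℝ) (1/2))
    (g : ℝ → ℝ) (hg : ∀ y ∈ Set.Icc (0:ℝ) 1, g y ∈ Set.Icc (0:ℝ) (1/2) ∧ Hb (g y) = y) :
    ConvexOn ℝ (Set.Icc (0:ℝ) 1) (fun ν => Hb (star (g ν) p)) := by
  have hinv : IsHbInvOn g := hg
  refine convexOn_of_hasDerivAt_of_monotoneOn (convex_Icc 0 1) (f' := gerberSlope p ∘ g)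
    hinv.continuousOn_Hb_star ?_ ?_ <;> rw [interior_Icc]
  · exact fun y hy => hinv.hasDerivAt_Hb_star hp hy
  · exact (monotoneOn_gerberSlope hp).comp (hinv.strictMonoOn.monotoneOn.mono Ioo_subset_Icc_self)
      hinv.mapsTo_Ioo
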